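/- On the alphabet A = {0,1}, the finite subshift Σ = {0^ω, (10)^ω, (01)^ω, 1^ω} is traceable (it is the trace subshift of the cellular automaton of anchor 3 and diameter 7 whose local rule f satisfies f(u_{−3}000111)=1, f(000111u_3)=0, f(u_{−3}001011)=0, f(001011u_3)=1, and f(u)=u_0 otherwise, earlier applicable case taking precedence), but Σ is not T3. -/
import Mathlib


variable {A : Type*}

/-- The onesided shift on `A^ℕ`. -/
def shiftN (z : ℕ → A) : ℕ → A := fun i => z (i + 1)

/-- The twosided shift on `A^ℤ`. -/
def shiftZ (x : ℤ → A) : ℤ → A := fun i => x (i + 1)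

/-- A (onesided) subshift: a closed, shift-stable set of infinite words. -/
def IsSubshift [TopologicalSpace A] (S : Set (ℕ → A)) : Prop :=
  IsClosed S ∧ ∀ z ∈ S, shiftN z ∈ S

/-- A 2-SFT: a subshift given by a set of forbidden words of length 2. -/
def IsTwoSFT (S : Set (ℕ → A)) : Prop :=
  ∃ Fb : Set (A × A), S = {z | ∀ i : ℕ, (z i, z (i + 1)) ∉ Fb}

/-- A k-SFT: a subshift given by a set of forbidden words of length k. -/
def IsKSFT (k : ℕ) (S : Set (ℕ → A)) : Prop :=
  ∃ Fb : Set (Fin k → A), S = {z | ∀ i : ℕ, (fun j : Fin k => z (i + (j : ℕ))) ∉ Fb}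

/-- A subshift of finite type. -/
def IsSFT (S : Set (ℕ → A)) : Prop := ∃ k : ℕ, IsKSFT k S

/-- A cellular automaton: a continuous self-map of `A^ℤ` commuting with the shift. -/
def IsCA [TopologicalSpace A] (F : (ℤ → A) → (ℤ → A)) : Prop :=
  Continuous F ∧ ∀ x, F (shiftZ x) = shiftZ (F x)

/-- The trace of `F` with initial condition `x`: the 0th column of the space-time diagram. -/
def caTrace (F : (ℤ → A) → (ℤ → A)) (x : ℤ → A) : ℕ → A := fun j => F^[j] x 0

/-- The trace subshift of `F`. -/
def traceSubshift (F : (ℤ → A) → (ℤ → A)) : Set (ℕ → A) := Set.range (caTrace F)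

/-- A subshift is traceable if it is the trace subshift of some CA. -/
def Traceable [TopologicalSpace A] (S : Set (ℕ → A)) : Prop :=
  ∃ F : (ℤ → A) → (ℤ → A), IsCA F ∧ traceSubshift F = S

/-- The q-th projection of an infinite word over the alphabet `A^k`. -/
def proj {k : ℕ} (q : Fin k) (z : ℕ → (Fin k → A)) : ℕ → A := fun j => z j q

/-- `π(Γ)`: the union of all projections. -/
def projAll {k : ℕ} (Γ : Set (ℕ → (Fin k → A))) : Set (ℕ → A) :=
  ⋃ q : Fin k, proj q '' Γ

/-- A subshift `S` on `A` is T1 if there is a 2-SFT `Γ ⊆ (A^k)^ℕ` with `π₀(Γ) = π(Γ) = S`. -/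
def IsT1 (S : Set (ℕ → A)) : Prop :=
  ∃ k : ℕ, ∃ hk : 0 < k, ∃ Γ : Set (ℕ → (Fin k → A)),
    IsTwoSFT Γ ∧ proj (⟨0, hk⟩ : Fin k) '' Γ = S ∧ projAll Γ = S

/-- A onesided CA: one admitting a local rule of anchor 0. -/
def IsOnesidedCA {C : Type*} (F : (ℤ → C) → (ℤ → C)) : Prop :=
  ∃ d : ℕ, ∃ f : (Fin d → C) → C, ∀ x i, F x i = f (fun j => x (i + (j : ℕ)))

/-- `S` is the k-trace of a onesided CA on some alphabet `B ⊆ A^k`. -/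
def KTraceable (k : ℕ) (S : Set (ℕ → A)) : Prop :=
  ∃ B : Set (Fin k → A), ∃ F : (ℤ → ↥B) → (ℤ → ↥B), IsOnesidedCA F ∧
    S = ⋃ q : Fin k, (fun z : ℕ → ↥B => fun j => ((z j : Fin k → A) q)) '' Set.range (caTrace F)

/-- `S` is a factor of `Γ`: a surjective continuous shift-commuting map from `Γ` onto `S`. -/
def IsFactorOf {B : Type*} [TopologicalSpace A] [TopologicalSpace B]
    (S : Set (ℕ → A)) (Γ : Set (ℕ → B)) : Prop :=
  ∃ φ : (ℕ → B) → (ℕ → A), ContinuousOn φ Γ ∧ φ '' Γ = S ∧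
    ∀ z ∈ Γ, φ (shiftN z) = shiftN (φ z)

/-- The language of a subshift: all finite factors of its elements. -/
def lang (S : Set (ℕ → A)) : Language A :=
  {w | ∃ z ∈ S, ∃ i : ℕ, w = List.ofFn (fun j : Fin w.length => z (i + (j : ℕ)))}

/-- A transitive subshift. -/
def IsTransitiveSubshift (S : Set (ℕ → A)) : Prop :=
  ∀ u ∈ lang S, ∀ v ∈ lang S, ∃ w : List A, u ++ w ++ v ∈ lang S

/-- A T2 subshift: sofic, and including an infinite transitive subshift. -/
def IsT2 [TopologicalSpace A] (S : Set (ℕ → A)) : Prop :=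
  (lang S).IsRegular ∧ ∃ Γ ⊆ S, IsSubshift Γ ∧ Γ.Infinite ∧ IsTransitiveSubshift Γ

/-- `B^ω`: infinite concatenations of words from `B ⊆ A^k`. -/
def Bomega {k : ℕ} (B : Set (Fin k → A)) : Set (ℕ → A) :=
  {z | ∀ i : ℕ, (fun q : Fin k => z (i * k + (q : ℕ))) ∈ B}

/-- A T3 subshift: T0 via a map `φ`, together with a periodic word `w ∉ φ(A)^*`. -/
def IsT3 (S : Set (ℕ → A)) : Prop :=
  ∃ φ : A → A, (∀ a : A, (fun j => φ^[j] a) ∈ S) ∧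
    ∃ w : List A, w ≠ [] ∧ (∃ a ∈ w, a ∉ Set.range φ) ∧
      ∃ z ∈ S, (∀ j : ℕ, z (j + w.length) = z j) ∧ ∀ i : Fin w.length, z (i : ℕ) = w.get i

/-- `0^ω` over `{0,1}`. -/
def yZero : ℕ → Fin 2 := fun _ => 0
/-- `(10)^ω` over `{0,1}`. -/
def yOneZero : ℕ → Fin 2 := fun j => if j % 2 = 0 then 1 else 0
/-- `(01)^ω` over `{0,1}`. -/
def yZeroOne : ℕ → Fin 2 := fun j => if j % 2 = 0 then 0 else 1
/-- `1^ω` over `{0,1}`. -/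
def yOne : ℕ → Fin 2 := fun _ => 1


/-! ### Auxiliary construction: an involutive CA of diameter 5 -/

/-- Local rule of diameter 5, anchor 2: flip the center cell iff the context is `01_01`. -/
def f5 (a b c d e : Fin 2) : Fin 2 :=
  if a = 0 ∧ b = 1 ∧ d = 0 ∧ e = 1 then c + 1 else c

/-- The cellular automaton defined by `f5`. -/
def Fca (x : ℤ → Fin 2) : ℤ → Fin 2 :=
  fun i => f5 (x (i - 2)) (x (i - 1)) (x i) (x (i + 1)) (x (i + 2))

lemma f5_key : ∀ a b c d e f g h k : Fin 2,
    f5 (f5 a b c d e) (f5 b c d e f) (f5 c d e f g) (f5 d e f g h) (f5 e f g h k) = e := by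
  decide

lemma Fca_invol (x : ℤ → Fin 2) : Fca (Fca x) = x := by
  funext i
  show f5 (f5 (x (i-2-2)) (x (i-2-1)) (x (i-2)) (x (i-2+1)) (x (i-2+2)))
        (f5 (x (i-1-2)) (x (i-1-1)) (x (i-1)) (x (i-1+1)) (x (i-1+2)))
        (f5 (x (i-2)) (x (i-1)) (x i) (x (i+1)) (x (i+2)))
        (f5 (x (i+1-2)) (x (i+1-1)) (x (i+1)) (x (i+1+1)) (x (i+1+2)))
        (f5 (x (i+2-2)) (x (i+2-1)) (x (i+2)) (x (i+2+1)) (x (i+2+2))) = x i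
  simp only [show i-2-2 = i-4 by ring, show i-2-1 = i-3 by ring, show i-2+1 = i-1 by ring,
    show i-2+2 = i by ring, show i-1-2 = i-3 by ring, show i-1-1 = i-2 by ring,
    show i-1+1 = i by ring, show i-1+2 = i+1 by ring, show i+1-2 = i-1 by ring,
    show i+1-1 = i by ring, show i+1+1 = i+2 by ring, show i+1+2 = i+3 by ring,
    show i+2-2 = i by ring, show i+2-1 = i+1 by ring, show i+2+1 = i+3 by ring,
    show i+2+2 = i+4 by ring]
  exact f5_key _ _ _ _ _ _ _ _ _

lemma Fca_continuous : Continuous Fca := by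
  apply continuous_pi
  intro i
  have hc : Continuous (fun w : Fin 2 × Fin 2 × Fin 2 × Fin 2 × Fin 2 =>
      f5 w.1 w.2.1 w.2.2.1 w.2.2.2.1 w.2.2.2.2) := continuous_of_discreteTopology
  have hw : Continuous (fun x : ℤ → Fin 2 =>
      ((x (i-2), x (i-1), x i, x (i+1), x (i+2)) : Fin 2 × Fin 2 × Fin 2 × Fin 2 × Fin 2)) :=
    (continuous_apply (i-2)).prodMk ((continuous_apply (i-1)).prodMk
      ((continuous_apply i).prodMk ((continuous_apply (i+1)).prodMk (continuous_apply (i+2)))))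
  exact hc.comp hw

lemma Fca_commutes (x : ℤ → Fin 2) : Fca (shiftZ x) = shiftZ (Fca x) := by
  funext i
  show f5 (x (i - 2 + 1)) (x (i - 1 + 1)) (x (i + 1)) (x (i + 1 + 1)) (x (i + 2 + 1))
      = f5 (x (i + 1 - 2)) (x (i + 1 - 1)) (x (i + 1)) (x (i + 1 + 1)) (x (i + 1 + 2))
  simp only [show i - 2 + 1 = i + 1 - 2 by ring, show i - 1 + 1 = i + 1 - 1 by ring,
    show i + 2 + 1 = i + 1 + 2 by ring]

lemma fin2_cases : ∀ a : Fin 2, a = 0 ∨ a = 1 := by decide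

lemma period_two_val (z : ℕ → Fin 2) (h : ∀ j, z (j + 2) = z j) :
    ∀ j, z j = if j % 2 = 0 then z 0 else z 1
  | 0 => by simp
  | 1 => by simp
  | (m + 2) => by
      rw [h m, period_two_val z h m, show (m + 2) % 2 = m % 2 by omega]

lemma caTrace_period (x : ℤ → Fin 2) (j : ℕ) :
    caTrace Fca x (j + 2) = caTrace Fca x j := by
  show Fca^[j+2] x 0 = Fca^[j] x 0
  rw [Function.iterate_add_apply, show Fca^[2] x = x from Fca_invol x]

lemma caTrace_form (x : ℤ → Fin 2) :
    caTrace Fca x = fun j => if j % 2 = 0 then x 0 else Fca x 0 := by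
  funext j
  rw [period_two_val (caTrace Fca x) (caTrace_period x) j]
  rfl

lemma eq_yZero : (fun j : ℕ => if j % 2 = 0 then (0 : Fin 2) else 0) = yZero := by
  funext j; simp [yZero]

lemma eq_yOne : (fun j : ℕ => if j % 2 = 0 then (1 : Fin 2) else 1) = yOne := by
  funext j; simp [yOne]

lemma eq_yOneZero : (fun j : ℕ => if j % 2 = 0 then (1 : Fin 2) else 0) = yOneZero := rfl

lemma eq_yZeroOne : (fun j : ℕ => if j % 2 = 0 then (0 : Fin 2) else 1) = yZeroOne := rfl

/-- Witness configuration for `(01)^ω`. -/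
def xZO : ℤ → Fin 2 := fun i => if i = -1 ∨ i = 2 then 1 else 0

/-- Witness configuration for `(10)^ω`. -/
def xOZ : ℤ → Fin 2 := fun i => if i = -1 ∨ i = 0 ∨ i = 2 then 1 else 0

/-- Witness configuration for `0^ω`. -/
def xZZ : ℤ → Fin 2 := fun _ => 0

/-- Witness configuration for `1^ω`. -/
def xOO : ℤ → Fin 2 := fun _ => 1

/-- The finite subshift `{0^ω, (10)^ω, (01)^ω, 1^ω}` on `{0,1}` is
traceable but not T3. -/
theorem stmt18 :
    Traceable ({yZero, yOneZero, yZeroOne, yOne} : Set (ℕ → Fin 2)) ∧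
      ¬ IsT3 ({yZero, yOneZero, yZeroOne, yOne} : Set (ℕ → Fin 2)) := by
  constructor
  · -- Traceable
    refine ⟨Fca, ⟨Fca_continuous, Fca_commutes⟩, ?_⟩
    ext z
    simp only [traceSubshift, Set.mem_range, Set.mem_insert_iff, Set.mem_singleton_iff]
    constructor
    · rintro ⟨x, rfl⟩
      rw [caTrace_form x]
      rcases fin2_cases (x 0) with h0 | h0 <;> rcases fin2_cases (Fca x 0) with h1 | h1 <;>
        simp only [h0, h1]
      · exact Or.inl eq_yZero
      · exact Or.inr (Or.inr (Or.inl eq_yZeroOne))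
      · exact Or.inr (Or.inl eq_yOneZero)
      · exact Or.inr (Or.inr (Or.inr eq_yOne))
    · rintro (rfl | rfl | rfl | rfl)
      · refine ⟨xZZ, ?_⟩
        rw [caTrace_form]
        have h0 : xZZ 0 = 0 := by decide
        have h1 : Fca xZZ 0 = 0 := by decide
        simp only [h0, h1]
        exact eq_yZero
      · refine ⟨xOZ, ?_⟩
        rw [caTrace_form]
        have h0 : xOZ 0 = 1 := by decide
        have h1 : Fca xOZ 0 = 0 := by decide
        simp only [h0, h1]
        exact eq_yOneZero
      · refine ⟨xZO, ?_⟩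
        rw [caTrace_form]
        have h0 : xZO 0 = 0 := by decide
        have h1 : Fca xZO 0 = 1 := by decide
        simp only [h0, h1]
        exact eq_yZeroOne
      · refine ⟨xOO, ?_⟩
        rw [caTrace_form]
        have h0 : xOO 0 = 1 := by decide
        have h1 : Fca xOO 0 = 1 := by decide
        simp only [h0, h1]
        exact eq_yOne
  · -- not T3
    rintro ⟨φ, horb, w, hw, ⟨a, haw, hrange⟩, -⟩
    have hne : ∀ x : Fin 2, φ x ≠ a := fun x hx => hrange ⟨x, hx⟩
    set b := φ a with hb
    have hba : b ≠ a := hne a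
    have hfb : φ b = b := by
      have htwo : ∀ u v t : Fin 2, u ≠ t → v ≠ t → u = v := by decide
      exact htwo (φ b) b a (hne b) hba
    have hit : ∀ j, φ^[j + 1] a = b := by
      intro j
      induction j with
      | zero => simp [hb]
      | succ n ih => rw [Function.iterate_succ_apply', ih, hfb]
    have e1 : φ^[1] a = b := hit 0
    have e2 : φ^[2] a = b := hit 1
    have hz := horb a
    simp only [Set.mem_insert_iff, Set.mem_singleton_iff] at hz
    rcases hz with h | h | h | h
    · have h0 : a = 0 := by simpa [yZero] using congrFun h 0
      have h1 : b = 0 := by rw [← e1]; simpa [yZero] using congrFun h 1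
      exact hba (h1.trans h0.symm)
    · have h1 : b = 0 := by rw [← e1]; simpa [yOneZero] using congrFun h 1
      have h2 : b = 1 := by rw [← e2]; simpa [yOneZero] using congrFun h 2
      exact absurd (h1.symm.trans h2) (by decide)
    · have h1 : b = 1 := by rw [← e1]; simpa [yZeroOne] using congrFun h 1
      have h2 : b = 0 := by rw [← e2]; simpa [yZeroOne] using congrFun h 2
      exact absurd (h2.symm.trans h1) (by decide)
    · have h0 : a = 1 := by simpa [yOne] using congrFun h 0
      have h1 : b = 1 := by rw [← e1]; simpa [yOne] using congrFun h 1
      exact hba (h1.trans h0.symm)
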